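/- Fix a natural number C ≥ 2. For a probability vector s ∈ ℝ^C (nonnegative entries summing to 1) with designated true class y, suppose s_c = (1 − s_y)/(C − 1) for every class c ≠ y. Let s(x₁) and s(x₂) be two such vectors with true classes y₁, y₂ and suppose 1/2 < s_{y₁}(x₁) < s_{y₂}(x₂) ≤ 1. Then the Shannon entropies satisfy H(s(x₁)) > H(s(x₂)), where H(s) = Σ_{c=1}^{C} (−s_c · log s_c) (with the convention 0·log 0 = 0). -/

import Mathlib

open Finset

/-- Shannon entropy (natural logarithm) of a vector `s : Fin C → ℝ`;
`Real.log 0 = 0` gives the convention `0 · log 0 = 0`. -/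
noncomputable def shannonEntropy {C : ℕ} (s : Fin C → ℝ) : ℝ :=
  ∑ c : Fin C, (-(s c) * Real.log (s c))

/-!
A vector with one entry `p` and its remaining `k` entries equal to `(1 - p) / k` has entropy
`peakedEntropy k p`, a function of `p` alone. Its derivative `log ((1 - p) / k) - log p` is
negative as soon as `p` exceeds the other entries, i.e. for `p > 1 / (k + 1)`; with `k = C - 1`
this covers `p > 1 / 2`.
-/

noncomputable def peakedEntropy (k p : ℝ) : ℝ :=
  Real.negMulLog p + k * Real.negMulLog ((1 - p) / k)

theorem shannonEntropy_eq_peakedEntropy {C : ℕ} (s : Fin C → ℝ) (y : Fin C)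
    (h : ∀ c, c ≠ y → s c = (1 - s y) / ((C : ℝ) - 1)) :
    shannonEntropy s = peakedEntropy ((C : ℝ) - 1) (s y) := by
  have hcard : ((univ.erase y).card : ℝ) = (C : ℝ) - 1 := by
    rw [card_erase_of_mem (mem_univ y), card_univ, Fintype.card_fin, Nat.cast_pred y.pos]
  calc shannonEntropy s
      = ∑ c ∈ univ.erase y, Real.negMulLog (s c) + Real.negMulLog (s y) :=
        (sum_erase_add _ _ (mem_univ y)).symm
    _ = peakedEntropy ((C : ℝ) - 1) (s y) := by
        rw [sum_congr rfl fun c hc => by rw [h c (ne_of_mem_erase hc)], sum_const, nsmul_eq_mul,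
          hcard, peakedEntropy, add_comm]

theorem hasDerivAt_peakedEntropy {k p : ℝ} (hk : k ≠ 0) (hp : p ≠ 0) (hp1 : p ≠ 1) :
    HasDerivAt (peakedEntropy k) (Real.log ((1 - p) / k) - Real.log p) p := by
  have hq : (1 - p) / k ≠ 0 := div_ne_zero (sub_ne_zero.2 (Ne.symm hp1)) hk
  have hrest : HasDerivAt (fun p => (1 - p) / k) (-1 / k) p := by
    simpa using ((hasDerivAt_id p).const_sub 1).div_const k
  refine ((Real.hasDerivAt_negMulLog hp).add
    (((Real.hasDerivAt_negMulLog hq).comp p hrest).const_mul k)).congr_deriv ?_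
  field_simp
  ring

theorem strictAntiOn_peakedEntropy {k : ℝ} (hk : 0 < k) :
    StrictAntiOn (peakedEntropy k) (Set.Icc (1 / (k + 1)) 1) := by
  apply strictAntiOn_of_deriv_neg (convex_Icc _ _)
  · exact Continuous.continuousOn (by unfold peakedEntropy; fun_prop)
  · intro p hp
    rw [interior_Icc] at hp
    obtain ⟨hp_gt, hp_lt⟩ := hp
    rw [div_lt_iff₀ (by linarith)] at hp_gt
    have hp : 0 < p := by nlinarith
    rw [(hasDerivAt_peakedEntropy hk.ne' hp.ne' hp_lt.ne).deriv, sub_neg]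
    exact Real.log_lt_log (div_pos (by linarith) hk) ((div_lt_iff₀ hk).2 (by linarith))

theorem entropy_comparison_general
    (C : ℕ) (hC : 2 ≤ C)
    (s₁ s₂ : Fin C → ℝ) (y₁ y₂ : Fin C)
    (hs₁_unif : ∀ c, c ≠ y₁ → s₁ c = (1 - s₁ y₁) / ((C : ℝ) - 1))
    (hs₂_unif : ∀ c, c ≠ y₂ → s₂ c = (1 - s₂ y₂) / ((C : ℝ) - 1))
    (h_half : (1 : ℝ) / 2 < s₁ y₁) (h_lt : s₁ y₁ < s₂ y₂) (h_le : s₂ y₂ ≤ 1) :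
    shannonEntropy s₂ < shannonEntropy s₁ := by
  have hC' : (2 : ℝ) ≤ C := by exact_mod_cast hC
  have hk : (0 : ℝ) < C - 1 := by linarith
  have h_inv : 1 / ((C : ℝ) - 1 + 1) ≤ 1 / 2 := by
    rw [sub_add_cancel]; exact one_div_le_one_div_of_le two_pos hC'
  rw [shannonEntropy_eq_peakedEntropy s₁ y₁ hs₁_unif, shannonEntropy_eq_peakedEntropy s₂ y₂ hs₂_unif]
  exact strictAntiOn_peakedEntropy hk ⟨by linarith, by linarith⟩ ⟨by linarith, h_le⟩ h_lt

/-- Part 1 of Theorem 2: for two probability vectors whose non-true-class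
entries are all equal, with true-class components `1/2 < s₁(y₁) < s₂(y₂) ≤ 1`,
the entropy of the first is strictly larger. -/
theorem entropy_comparison
    (C : ℕ) (hC : 2 ≤ C)
    (s₁ s₂ : Fin C → ℝ) (y₁ y₂ : Fin C)
    (hs₁_nonneg : ∀ c, 0 ≤ s₁ c) (hs₁_sum : ∑ c : Fin C, s₁ c = 1)
    (hs₂_nonneg : ∀ c, 0 ≤ s₂ c) (hs₂_sum : ∑ c : Fin C, s₂ c = 1)
    (hs₁_unif : ∀ c, c ≠ y₁ → s₁ c = (1 - s₁ y₁) / ((C : ℝ) - 1))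
    (hs₂_unif : ∀ c, c ≠ y₂ → s₂ c = (1 - s₂ y₂) / ((C : ℝ) - 1))
    (h_half : (1 : ℝ) / 2 < s₁ y₁) (h_lt : s₁ y₁ < s₂ y₂) (h_le : s₂ y₂ ≤ 1) :
    shannonEntropy s₂ < shannonEntropy s₁ :=
  entropy_comparison_general C hC s₁ s₂ y₁ y₂ hs₁_unif hs₂_unif h_half h_lt h_le
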